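/- With S positive definite and invariant under the twirling 𝓔, and K(S) = S^{-1/2}(𝓔((S^{1/2}RS^{1/2})^{1/2}))²S^{-1/2}, the fidelity satisfies F(S, K(S)) = F(R, S). -/

import Mathlib

open Matrix
open scoped ComplexOrder Classical

variable {n : Type*} [Fintype n] [DecidableEq n]

/-- The positive semidefinite square root of a matrix (junk value `0` if not PSD). -/
noncomputable def msqrt (A : Matrix n n ℂ) : Matrix n n ℂ :=
  if h : A.PosSemidef then (h.1.eigenvectorUnitary : Matrix n n ℂ) *
    diagonal (fun i => ((Real.sqrt (h.1.eigenvalues i) : ℝ) : ℂ)) *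
    (star h.1.eigenvectorUnitary : Matrix n n ℂ) else 0

/-- The trace norm `‖M‖₁ = Tr √(Mᴴ M)`. -/
noncomputable def traceNorm (M : Matrix n n ℂ) : ℝ :=
  ((msqrt (Mᴴ * M)).trace).re

/-- The fidelity `F(R,S) = (Tr √(√R S √R))²` of positive semidefinite matrices. -/
noncomputable def fidelity (R S : Matrix n n ℂ) : ℝ :=
  (((msqrt (msqrt R * S * msqrt R)).trace).re) ^ 2

/-- The squared Bures distance `B(R,S)² = Tr R + Tr S - 2 √F(R,S)`. -/
noncomputable def bures2 (R S : Matrix n n ℂ) : ℝ :=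
  (R.trace).re + (S.trace).re - 2 * Real.sqrt (fidelity R S)

/-- The twirling map `𝓔(X) = (1/|G|) ∑ g, U g * X * (U g)ᴴ`. -/
noncomputable def twirl {G : Type*} [Fintype G] (U : G → Matrix n n ℂ)
    (X : Matrix n n ℂ) : Matrix n n ℂ :=
  (Fintype.card G : ℂ)⁻¹ • ∑ g, U g * X * (U g)ᴴ

/-- The maximum eigenvalue of a Hermitian matrix. -/
noncomputable def lamMax {A : Matrix n n ℂ} (hA : A.IsHermitian) : ℝ :=
  ⨆ i, hA.eigenvalues i

/-- The minimum eigenvalue of a Hermitian matrix. -/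
noncomputable def lamMin {A : Matrix n n ℂ} (hA : A.IsHermitian) : ℝ :=
  ⨅ i, hA.eigenvalues i

/-- The fixed point iteration map `K(S) = S^{-1/2} (𝓔((S^{1/2} R S^{1/2})^{1/2}))² S^{-1/2}`. -/
noncomputable def iterMap {G : Type*} [Fintype G] (U : G → Matrix n n ℂ)
    (R S : Matrix n n ℂ) : Matrix n n ℂ :=
  (msqrt S)⁻¹ * (twirl U (msqrt (msqrt S * R * msqrt S))) ^ 2 * (msqrt S)⁻¹


/-! Conjugating `K(S)` by `√S` gives `𝓔(√(√S R √S))²`, whose square root is `𝓔(√(√S R √S))`.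
The twirl preserves traces, so `√F(S, K(S)) = Tr √(√S R √S) = √F(S, R)`, and fidelity is symmetric
because `Tr √(X Xᴴ) = Tr √(Xᴴ X)` for `X = √R √S`. -/

open scoped MatrixOrder

lemma msqrt_eq_cfcSqrt {A : Matrix n n ℂ} (hA : A.PosSemidef) : msqrt A = CFC.sqrt A := by
  rw [msqrt, dif_pos hA, CFC.sqrt_eq_cfc, cfc_nnreal_eq_real _ A, hA.1.cfc_eq, IsHermitian.cfc,
    Unitary.conjStarAlgAut_apply]
  congr 2
  ext i j
  simp [diagonal_apply, max_eq_left (hA.eigenvalues_nonneg i)]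

lemma posSemidef_msqrt {A : Matrix n n ℂ} (hA : A.PosSemidef) : (msqrt A).PosSemidef := by
  rw [msqrt_eq_cfcSqrt hA, ← nonneg_iff_posSemidef]
  exact CFC.sqrt_nonneg A

lemma msqrt_mul_msqrt {A : Matrix n n ℂ} (hA : A.PosSemidef) : msqrt A * msqrt A = A := by
  rw [msqrt_eq_cfcSqrt hA]
  exact CFC.sqrt_mul_sqrt_self A hA.nonneg

lemma msqrt_eq_of_mul_self_eq {A B : Matrix n n ℂ} (hB : B.PosSemidef) (h : B * B = A) :
    msqrt A = B := by
  have hA : A.PosSemidef := by simpa [← h, pow_two] using hB.pow 2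
  rw [msqrt_eq_cfcSqrt hA]
  exact CFC.sqrt_unique h hB.nonneg

lemma isUnit_msqrt {A : Matrix n n ℂ} (hA : A.PosSemidef) (hu : IsUnit A) : IsUnit (msqrt A) :=
  isUnit_of_mul_isUnit_left (by rwa [msqrt_mul_msqrt hA])

lemma msqrt_mul_self {A : Matrix n n ℂ} (hA : A.PosSemidef) : msqrt (A * A) = A :=
  msqrt_eq_of_mul_self_eq hA rfl

/-- With `P = √(X Xᴴ)`, the square root of `Xᴴ X` is `Xᴴ P⁻¹ X`, whose trace is that of `P`. -/
lemma trace_msqrt_mul_conjTranspose_self {X : Matrix n n ℂ} (hX : IsUnit X) :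
    (msqrt (X * Xᴴ)).trace = (msqrt (Xᴴ * X)).trace := by
  set P := msqrt (X * Xᴴ)
  have hXX : (X * Xᴴ).PosSemidef := posSemidef_self_mul_conjTranspose X
  have hPP : P * P = X * Xᴴ := msqrt_mul_msqrt hXX
  have hP : IsUnit P.det := (isUnit_iff_isUnit_det P).mp <|
    isUnit_msqrt hXX (hX.mul (by rwa [← star_eq_conjTranspose, isUnit_star]))
  have hsqrt : msqrt (Xᴴ * X) = Xᴴ * P⁻¹ * X := by
    refine msqrt_eq_of_mul_self_eq ((posSemidef_msqrt hXX).inv.conjTranspose_mul_mul_same X) ?_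
    calc Xᴴ * P⁻¹ * X * (Xᴴ * P⁻¹ * X) = Xᴴ * P⁻¹ * (P * P) * P⁻¹ * X := by
          simp only [hPP, mul_assoc]
      _ = Xᴴ * (P⁻¹ * P) * (P * P⁻¹) * X := by simp only [mul_assoc]
      _ = Xᴴ * X := by rw [nonsing_inv_mul P hP, mul_nonsing_inv P hP, mul_one, mul_one]
  rw [hsqrt, trace_mul_cycle, ← hPP, mul_assoc, mul_nonsing_inv P hP, mul_one]

lemma fidelity_comm {R S : Matrix n n ℂ} (hR : R.PosDef) (hS : S.PosDef) :
    fidelity R S = fidelity S R := by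
  have hR' : (msqrt R).IsHermitian := (posSemidef_msqrt hR.posSemidef).isHermitian
  have hS' : (msqrt S).IsHermitian := (posSemidef_msqrt hS.posSemidef).isHermitian
  set X := msqrt R * msqrt S
  have hX : IsUnit X :=
    (isUnit_msqrt hR.posSemidef hR.isUnit).mul (isUnit_msqrt hS.posSemidef hS.isUnit)
  have hXX : msqrt R * S * msqrt R = X * Xᴴ := by
    conv_lhs => rw [← msqrt_mul_msqrt hS.posSemidef]
    simp only [X, conjTranspose_mul, hR'.eq, hS'.eq, mul_assoc]
  have hXX' : msqrt S * R * msqrt S = Xᴴ * X := by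
    conv_lhs => rw [← msqrt_mul_msqrt hR.posSemidef]
    simp only [X, conjTranspose_mul, hR'.eq, hS'.eq, mul_assoc]
  rw [fidelity, fidelity, hXX, hXX', trace_msqrt_mul_conjTranspose_self hX]

section Twirl

variable {G : Type*} [Fintype G] (U : G → Matrix n n ℂ)

lemma posSemidef_twirl {A : Matrix n n ℂ} (hA : A.PosSemidef) : (twirl U A).PosSemidef := by
  rw [← nonneg_iff_posSemidef, twirl]
  refine smul_nonneg (inv_nonneg.mpr (Nat.cast_nonneg _)) (Finset.sum_nonneg fun g _ => ?_)
  rw [← star_eq_conjTranspose]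
  exact star_right_conjugate_nonneg hA.nonneg (U g)

lemma trace_twirl [Nonempty G] (hU : ∀ g, U g ∈ unitaryGroup n ℂ) (A : Matrix n n ℂ) :
    (twirl U A).trace = A.trace := by
  have hconj (g : G) : (U g * A * (U g)ᴴ).trace = A.trace := by
    rw [trace_mul_cycle, ← star_eq_conjTranspose, mem_unitaryGroup_iff'.mp (hU g), one_mul]
  rw [twirl, trace_smul, trace_sum, Finset.sum_congr rfl fun g _ => hconj g, Finset.sum_const,
    Finset.card_univ, nsmul_eq_mul, smul_eq_mul,
    inv_mul_cancel_left₀ (Nat.cast_ne_zero.mpr Fintype.card_ne_zero)]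

lemma nonempty_of_twirl_eq_self [Nonempty n] {S : Matrix n n ℂ} (hS : IsUnit S)
    (hfix : twirl U S = S) : Nonempty G := by
  by_contra hG
  rw [not_nonempty_iff] at hG
  rw [← hfix, twirl, Finset.univ_eq_empty, Finset.sum_empty, smul_zero] at hS
  exact not_isUnit_zero hS

end Twirl

lemma msqrt_mul_iterMap_mul_msqrt {G : Type*} [Fintype G] (U : G → Matrix n n ℂ)
    (R : Matrix n n ℂ) {S : Matrix n n ℂ} (hS : S.PosDef) :
    msqrt S * iterMap U R S * msqrt S = twirl U (msqrt (msqrt S * R * msqrt S)) ^ 2 := by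
  have hT : IsUnit (msqrt S).det :=
    (isUnit_iff_isUnit_det _).mp (isUnit_msqrt hS.posSemidef hS.isUnit)
  rw [iterMap, ← mul_assoc, ← mul_assoc, mul_nonsing_inv _ hT, one_mul, mul_assoc,
    nonsing_inv_mul _ hT, mul_one]

/-- `F(S, K(S)) = F(R, S)`. -/
theorem fidelity_iterMap {G : Type*} [Fintype G] (U : G → Matrix n n ℂ)
    (hU : ∀ g, U g ∈ Matrix.unitaryGroup n ℂ)
    (R S : Matrix n n ℂ) (hR : R.PosDef) (hS : S.PosDef)
    (hfix : twirl U S = S) :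
    fidelity S (iterMap U R S) = fidelity R S := by
  set A := msqrt (msqrt S * R * msqrt S)
  have hA : A.PosSemidef := by
    refine posSemidef_msqrt ?_
    simpa [(posSemidef_msqrt hS.posSemidef).isHermitian.eq] using
      hR.posSemidef.mul_mul_conjTranspose_same (msqrt S)
  have htrace : (twirl U A).trace = A.trace := by
    cases isEmpty_or_nonempty n
    · simp [trace]
    · have := nonempty_of_twirl_eq_self U hS.isUnit hfix
      exact trace_twirl U hU A
  calc fidelity S (iterMap U R S) = ((twirl U A).trace.re) ^ 2 := by
        rw [fidelity, msqrt_mul_iterMap_mul_msqrt U R hS, pow_two (twirl U A),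
          msqrt_mul_self (posSemidef_twirl U hA)]
    _ = fidelity S R := by rw [htrace, fidelity]
    _ = fidelity R S := fidelity_comm hS hR
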